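/- Let μ ∈ (1,2) be rational, given as an irreducible fraction μ = c/d with c, d positive integers. Then for every integer k ≥ 2, |I_k| ≥ 1/(2 d^k). -/

import Mathlib

open Set MeasureTheory

/-- The tent map `f(x) = μx` for `x ≤ 1/2` and `μ(1-x)` for `x ≥ 1/2`. -/
noncomputable def tentMap (μ : ℝ) (x : ℝ) : ℝ :=
  if x ≤ 1/2 then μ * x else μ * (1 - x)

/-- `tentBit μ x k` is the `(k+1)`-st bit `b_{k+1}` of the tent code of `x`. -/
noncomputable def tentBit (μ x : ℝ) : ℕ → Bool
  | 0 => if 1/2 ≤ x then true else false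
  | k + 1 =>
    if (tentMap μ)^[k+1] x < 1/2 then tentBit μ x k
    else if 1/2 < (tentMap μ)^[k+1] x then !(tentBit μ x k)
    else true

/-- The tent code `γ^n(x) = b_1 ⋯ b_n`. -/
noncomputable def tentCode (μ : ℝ) (n : ℕ) (x : ℝ) : List Bool :=
  (List.range n).map (tentBit μ x)

/-- The tent language `L_n = {γ^n(x) : x ∈ [0,1)}`. -/
def tentLang (μ : ℝ) (n : ℕ) : Set (List Bool) :=
  {w | ∃ x ∈ Set.Ico (0:ℝ) 1, tentCode μ n x = w}

/-- The segment-type `T(w) = {f^n(x) : x ∈ [0,1), γ^n(x) = w}`. -/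
def segType (μ : ℝ) (n : ℕ) (w : List Bool) : Set ℝ :=
  {y | ∃ x ∈ Set.Ico (0:ℝ) 1, tentCode μ n x = w ∧ (tentMap μ)^[n] x = y}

/-- The set of segment-types `𝒯_n = {T(w) : w ∈ L_n}`. -/
def typeSet (μ : ℝ) (n : ℕ) : Set (Set ℝ) :=
  {S | ∃ w ∈ tentLang μ n, segType μ n w = S}

/-- `I_i = T(γ^i(1/2))`. -/
noncomputable def Iseg (μ : ℝ) (i : ℕ) : Set ℝ :=
  segType μ i (tentCode μ i (1/2))

/-- `Ī_i = T(c̄_i)` where `c̄_i` is the bitwise complement of `γ^i(1/2)`. -/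
noncomputable def Isegbar (μ : ℝ) (i : ℕ) : Set ℝ :=
  segType μ i ((tentCode μ i (1/2)).map (fun b => !b))

/-- The length of the interval `T(w)` (zero if `T(w)` is empty). -/
noncomputable def segLen (μ : ℝ) (n : ℕ) (w : List Bool) : ℝ :=
  (MeasureTheory.volume (segType μ n w)).toReal

/-!
Right of the critical point, `f^k` is affine with slope `±μ^k` on a one-sided neighbourhood
`[1/2, 1/2 + ε)` whose points all share the code of `1/2`; going from `k` to `k + 1`, the
neighbourhood only has to shrink so that its image under `f^k` stays on the side of `1/2` where
`f^k(1/2)` lies. The image of the neighbourhood under `f^k`, of length `μ^k ε`, lies in `I_k`, so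
`|I_k|` is bounded below by the distances `|f^n(1/2) - 1/2|`, `n < k`. For `μ = c/d` in lowest
terms, `2 d^n f^n(1/2)` is an integer prime to `d`, hence different from `d^n`, which makes that
distance at least `1/(2 d^n)`.
-/

open Function
open scoped Pointwise

lemma volume_image_affine (z u : ℝ) (s : Set ℝ) :
    volume ((fun t => z + u * t) '' s) = ENNReal.ofReal |u| * volume s := by
  have : (fun t => z + u * t) '' s = (z + ·) '' (u • s) := by
    rw [← image_smul, image_image]; rfl
  rw [this, image_add_left, measure_preimage_add, Measure.addHaar_smul, Module.finrank_self,
    pow_one]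

section TentMap

variable {μ : ℝ}

lemma tentMap_of_le {x : ℝ} (h : x ≤ 1/2) : tentMap μ x = μ * x := if_pos h

lemma tentMap_of_ge {x : ℝ} (h : 1/2 ≤ x) : tentMap μ x = μ * (1 - x) := by
  rcases h.eq_or_lt with rfl | h
  · rw [tentMap_of_le le_rfl]; ring
  · exact if_neg h.not_ge

lemma mapsTo_tentMap (h0 : 0 ≤ μ) (h2 : μ ≤ 2) : MapsTo (tentMap μ) (Icc 0 1) (Icc 0 1) := by
  rintro x ⟨hx0, hx1⟩
  unfold tentMap
  split_ifs <;> constructor <;> nlinarith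

lemma segType_subset_Icc (h0 : 0 ≤ μ) (h2 : μ ≤ 2) (n : ℕ) (w : List Bool) :
    segType μ n w ⊆ Icc 0 1 := by
  rintro _ ⟨x, hx, -, rfl⟩
  exact (mapsTo_tentMap h0 h2).iterate n ⟨hx.1, hx.2.le⟩

lemma exists_slope_tentMap (μ x : ℝ) :
    ∃ σ, |σ| = |μ| ∧ ∀ y, |y - x| < |x - 1/2| → tentMap μ y = tentMap μ x + σ * (y - x) := by
  rcases lt_or_ge x (1/2) with hx | hx
  · refine ⟨μ, rfl, fun y hy => ?_⟩
    rw [abs_of_neg (show x - 1/2 < 0 by linarith)] at hy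
    have hy' : y ≤ 1/2 := by linarith [(abs_lt.mp hy).2]
    rw [tentMap_of_le hy', tentMap_of_le hx.le]; ring
  · refine ⟨-μ, abs_neg μ, fun y hy => ?_⟩
    rw [abs_of_nonneg (show 0 ≤ x - 1/2 by linarith)] at hy
    have hy' : 1/2 ≤ y := by linarith [(abs_lt.mp hy).1]
    rw [tentMap_of_ge hy', tentMap_of_ge hx]; ring

lemma tentBit_succ_eq_of_abs_lt {x y : ℝ} {j : ℕ} (hbit : tentBit μ y j = tentBit μ x j)
    (hclose : |(tentMap μ)^[j+1] y - (tentMap μ)^[j+1] x| < |(tentMap μ)^[j+1] x - 1/2|) :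
    tentBit μ y (j+1) = tentBit μ x (j+1) := by
  simp only [tentBit, hbit]
  set a := (tentMap μ)^[j+1] y
  set b := (tentMap μ)^[j+1] x
  have hlt := abs_sub_lt_iff.mp hclose
  rcases lt_trichotomy b (1/2) with hb | hb | hb
  · rw [abs_of_neg (sub_neg.mpr hb)] at hlt
    have ha : a < 1/2 := by linarith [hlt.1]
    rw [if_pos ha, if_pos hb]
  · rw [hb, sub_self, abs_zero] at hclose
    exact absurd hclose (abs_nonneg _).not_gt
  · rw [abs_of_pos (sub_pos.mpr hb)] at hlt
    have ha : 1/2 < a := by linarith [hlt.2]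
    rw [if_neg (not_lt.mpr ha.le), if_neg (not_lt.mpr hb.le), if_pos ha, if_pos hb]

lemma tentCode_eq_iff {n : ℕ} {x y : ℝ} :
    tentCode μ n x = tentCode μ n y ↔ ∀ i < n, tentBit μ x i = tentBit μ y i := by
  simp [tentCode, List.map_inj_left]

lemma exists_affine_branch_right_of_half (hμ : 1 ≤ μ) {δ : ℝ} (hδ : 0 < δ) (hδμ : δ ≤ μ / 2)
    {k : ℕ} (hk : 1 ≤ k) (hgap : ∀ n, 1 ≤ n → n < k → δ ≤ |(tentMap μ)^[n] (1/2) - 1/2|) :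
    ∃ ε ≤ 1/2, δ ≤ μ^k * ε ∧ ∃ u, |u| = μ^k ∧ ∀ t ∈ Ico 0 ε,
      (∀ i < k, tentBit μ (1/2 + t) i = tentBit μ (1/2) i) ∧
      (tentMap μ)^[k] (1/2 + t) = (tentMap μ)^[k] (1/2) + u * t := by
  induction k, hk using Nat.le_induction with
  | base =>
    refine ⟨1/2, le_rfl, by linarith, -μ, by simp [abs_of_pos (by linarith : 0 < μ)],
      fun t ht => ⟨fun i hi => ?_, ?_⟩⟩
    · obtain rfl : i = 0 := by omega
      simp [tentBit, ht.1]
    · rw [iterate_one, tentMap_of_ge (by linarith [ht.1]), tentMap_of_ge le_rfl]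
      ring
  | succ k hk ih =>
    obtain ⟨ε, hε, hδε, u, hu, hbranch⟩ := ih fun n h1 h2 => hgap n h1 (by omega)
    set z := (tentMap μ)^[k] (1/2)
    have hgapk : δ ≤ |z - 1/2| := hgap k hk (by omega)
    obtain ⟨σ, hσ, hslope⟩ := exists_slope_tentMap μ z
    have hμk : 0 < μ^k := by positivity
    refine ⟨min ε (|z - 1/2| / μ^k), (min_le_left _ _).trans hε, ?_, σ * u, ?_, fun t ht => ?_⟩
    · calc δ ≤ min (μ^k * ε) |z - 1/2| := le_min hδε hgapk
        _ ≤ μ * min (μ^k * ε) |z - 1/2| := le_mul_of_one_le_left (hδ.le.trans (le_min hδε hgapk)) hμ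
        _ = μ^(k+1) * min ε (|z - 1/2| / μ^k) := by
          rw [pow_succ', mul_assoc, mul_min_of_nonneg _ _ hμk.le, mul_div_cancel₀ _ hμk.ne']
    · rw [abs_mul, hσ, hu, abs_of_pos (by linarith), pow_succ']
    · obtain ⟨hbits, hval⟩ := hbranch t ⟨ht.1, ht.2.trans_le (min_le_left _ _)⟩
      have hclose : |(tentMap μ)^[k] (1/2 + t) - z| < |z - 1/2| := by
        rw [hval, add_sub_cancel_left, abs_mul, hu, abs_of_nonneg ht.1]
        exact (lt_div_iff₀' hμk).mp (ht.2.trans_le (min_le_right _ _))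
      refine ⟨fun i hi => ?_, ?_⟩
      · rcases Nat.lt_succ_iff_lt_or_eq.mp hi with hi | rfl
        · exact hbits i hi
        · obtain ⟨j, rfl⟩ : ∃ j, i = j + 1 := ⟨i - 1, by omega⟩
          exact tentBit_succ_eq_of_abs_lt (hbits j (by omega)) hclose
      · rw [iterate_succ_apply', iterate_succ_apply', hslope _ hclose, hval]
        ring

lemma ofReal_le_volume_Iseg (hμ : 1 ≤ μ) {δ : ℝ} (hδ : 0 < δ) (hδμ : δ ≤ μ / 2)
    {k : ℕ} (hk : 1 ≤ k) (hgap : ∀ n, 1 ≤ n → n < k → δ ≤ |(tentMap μ)^[n] (1/2) - 1/2|) :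
    ENNReal.ofReal δ ≤ volume (Iseg μ k) := by
  obtain ⟨ε, hε, hδε, u, hu, hbranch⟩ := exists_affine_branch_right_of_half hμ hδ hδμ hk hgap
  have hsub : (fun t => (tentMap μ)^[k] (1/2) + u * t) '' Ico 0 ε ⊆ Iseg μ k := by
    rintro _ ⟨t, ht, rfl⟩
    obtain ⟨hbits, hval⟩ := hbranch t ht
    exact ⟨1/2 + t, ⟨by linarith [ht.1], by linarith [ht.2]⟩, tentCode_eq_iff.mpr hbits, hval⟩
  calc ENNReal.ofReal δ ≤ ENNReal.ofReal (μ^k * ε) := ENNReal.ofReal_le_ofReal hδε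
    _ = volume ((fun t => (tentMap μ)^[k] (1/2) + u * t) '' Ico 0 ε) := by
      rw [volume_image_affine, Real.volume_Ico, ← ENNReal.ofReal_mul (abs_nonneg _), hu, sub_zero]
    _ ≤ volume (Iseg μ k) := measure_mono hsub

end TentMap

section Rational

variable {c d : ℕ}

lemma exists_isCoprime_iterate_tentMap_half (hd : 0 < d) (hcd : Nat.Coprime c d) {k : ℕ}
    (hk : 1 ≤ k) :
    ∃ m : ℤ, IsCoprime m d ∧ (tentMap (c / d))^[k] (1/2 : ℝ) = m / (2 * d^k) := by
  have hcd' : IsCoprime (c : ℤ) d := Nat.isCoprime_iff_coprime.mpr hcd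
  have hdR : (d : ℝ) ≠ 0 := by positivity
  induction k, hk using Nat.le_induction with
  | base => exact ⟨c, hcd', by rw [iterate_one, tentMap_of_le le_rfl]; push_cast; field_simp⟩
  | succ k hk ih =>
    obtain ⟨m, hm, hval⟩ := ih
    rw [iterate_succ_apply', hval]
    by_cases h : (m : ℝ) / (2 * d^k) ≤ 1/2
    · exact ⟨c * m, hcd'.mul_left hm, by rw [tentMap_of_le h]; push_cast; field_simp; ring⟩
    · refine ⟨c * (2 * d^k - m), hcd'.mul_left ?_, ?_⟩
      · obtain ⟨j, rfl⟩ : ∃ j, k = j + 1 := ⟨k - 1, by omega⟩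
        rw [show 2 * (d : ℤ)^(j+1) - m = -m + d * (2 * d^j) by ring]
        exact hm.neg_left.add_mul_left_left _
      · rw [tentMap_of_ge (not_le.mp h).le]; push_cast; field_simp; ring

lemma one_div_two_mul_pow_le_abs_iterate_tentMap_half_sub_half (hd : 2 ≤ d)
    (hcd : Nat.Coprime c d) {k : ℕ} (hk : 1 ≤ k) :
    1 / (2 * (d : ℝ)^k) ≤ |(tentMap (c / d))^[k] (1/2 : ℝ) - 1/2| := by
  obtain ⟨m, hm, hval⟩ := exists_isCoprime_iterate_tentMap_half (by omega) hcd hk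
  have hne : m - d^k ≠ 0 := by
    intro h
    have hdvd : (d : ℤ) ∣ m := (sub_eq_zero.mp h) ▸ dvd_pow_self _ (by omega)
    have := Int.isUnit_iff.mp (hm.isUnit_of_dvd' hdvd dvd_rfl)
    omega
  have hpos : (0 : ℝ) < 2 * (d : ℝ)^k := by positivity
  have hdiff : (tentMap (c / d))^[k] (1/2 : ℝ) - 1/2 = ((m - d^k : ℤ) : ℝ) / (2 * (d : ℝ)^k) := by
    rw [hval]; push_cast; field_simp
  rw [hdiff, abs_div, abs_of_pos hpos]
  gcongr
  exact_mod_cast Int.one_le_abs hne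

end Rational

theorem Iseg_length_lower_bound_general (μ : ℝ) (hμ1 : 1 < μ) (hμ2 : μ < 2)
    (c d : ℕ) (hcd : Nat.Coprime c d)
    (hμ : μ = (c : ℝ) / d) (k : ℕ) (hk : 2 ≤ k) :
    1 / (2 * (d : ℝ) ^ k) ≤ (volume (Iseg μ k)).toReal := by
  have hd : 2 ≤ d := by
    by_contra! h
    interval_cases d
    · norm_num [hμ] at hμ1
    · rw [Nat.cast_one, div_one] at hμ
      subst hμ
      norm_cast at hμ1 hμ2
      omega
  have hdk : (1 : ℝ) ≤ (d : ℝ)^k := one_le_pow₀ (by exact_mod_cast (by omega : 1 ≤ d))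
  have hδ : 0 < 1 / (2 * (d : ℝ)^k) := by positivity
  have hδμ : 1 / (2 * (d : ℝ)^k) ≤ μ / 2 := by
    rw [div_le_div_iff₀ (by positivity) two_pos]; nlinarith
  have hgap : ∀ n, 1 ≤ n → n < k → 1 / (2 * (d : ℝ)^k) ≤ |(tentMap μ)^[n] (1/2) - 1/2| := by
    intro n hn hnk
    calc 1 / (2 * (d : ℝ)^k) ≤ 1 / (2 * (d : ℝ)^n) := by
          gcongr
          exact_mod_cast (by omega : 1 ≤ d)
      _ ≤ _ := hμ ▸ one_div_two_mul_pow_le_abs_iterate_tentMap_half_sub_half hd hcd hn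
  have hfin : volume (Iseg μ k) ≠ ⊤ :=
    ne_top_of_le_ne_top (by simp [Real.volume_Icc])
      (measure_mono (segType_subset_Icc (by linarith) hμ2.le k _))
  exact (ENNReal.ofReal_le_iff_le_toReal hfin).mp
    (ofReal_le_volume_Iseg hμ1.le hδ hδμ (by omega) hgap)

/-- for rational `μ = c/d` in lowest terms, `|I_k| ≥ 1/(2 d^k)` for `k ≥ 2`. -/
theorem Iseg_length_lower_bound (μ : ℝ) (hμ1 : 1 < μ) (hμ2 : μ < 2)
    (c d : ℕ) (hc : 0 < c) (hd : 0 < d) (hcd : Nat.Coprime c d)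
    (hμ : μ = (c : ℝ) / d) (k : ℕ) (hk : 2 ≤ k) :
    1 / (2 * (d : ℝ) ^ k) ≤ (volume (Iseg μ k)).toReal :=
  Iseg_length_lower_bound_general μ hμ1 hμ2 c d hcd hμ k hk
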